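/- arXiv:2103.10904 — 4 statements merged into one kernel-verified Lean document; each statement's English description precedes it below -/
import Mathlib

section
/- For all m ≥ 0, the Frobenius number G_e(m) of the set {e_m, e_{m+1}, e_{m+2}, …} of evil numbers ≥ e_m satisfies 4m ≤ G_e(m) ≤ 6m + 7. -/
/-- The Thue–Morse sequence: parity of the binary digit sum of `n`. -/
def tm (n : ℕ) : ℕ := (Nat.digits 2 n).sum % 2

/-- The `n`-th evil number. -/
def evilSeq (n : ℕ) : ℕ := 2 * n + tm n

/-!
The evil numbers `e_j = 2j + t(j)`, `j ≥ m`, all lie in `[2m, ∞)`, and since the Thue–Morse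
sequence never takes the same value three times in a row, every triple `w, w + 2, w + 4` with
`w ≥ 2m` contains one of them. Hence once `v, v + 2, v + 4` are sums of two such evil numbers,
every `k ≥ 2m + v + 4` is representable; inspecting `t(m), …, t(m + 3)` gives such a `v ≤ 4m + 4`
(the pattern `0, 1, 1, 0` needs `v = 4m + 6` and two extra triple sums), so `G_e(m) ≤ 6m + 7`.
Below `6m` a representable number is `0`, one evil number or a sum of two of them, and none of
these equals `4m + 1 - t(m)`, so `G_e(m) ≥ 4m`.
-/

theorem AddSubmonoid.mem_of_meets_every_triple {A : AddSubmonoid ℕ} {c v k : ℕ}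
    (hA : ∀ w, c ≤ w → ∃ i ≤ 2, w + 2 * i ∈ A)
    (h0 : v ∈ A) (h2 : v + 2 ∈ A) (h4 : v + 4 ∈ A) (hk : c + v + 4 ≤ k) : k ∈ A := by
  obtain ⟨i, hi, hw⟩ := hA (k - (v + 4)) (by omega)
  have hsplit : k = v + 2 * (2 - i) + (k - (v + 4) + 2 * i) := by omega
  rw [hsplit]
  refine add_mem ?_ hw
  interval_cases i
  exacts [h4, h2, h0]

theorem AddSubmonoid.nat_mem_closure_of_lt_three_mul {S : Set ℕ} {a x : ℕ}
    (hS : ∀ s ∈ S, a ≤ s) (hx : x ∈ AddSubmonoid.closure S) (hlt : x < 3 * a) :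
    x = 0 ∨ x ∈ S ∨ ∃ s ∈ S, ∃ t ∈ S, x = s + t := by
  obtain ⟨l, hl, rfl⟩ := AddSubmonoid.exists_list_of_mem_closure hx
  rcases l with _ | ⟨s, _ | ⟨t, _ | ⟨u, rest⟩⟩⟩
  · exact Or.inl rfl
  · exact Or.inr (Or.inl (by simpa using hl s (by simp)))
  · exact Or.inr (Or.inr ⟨s, hl s (by simp), t, hl t (by simp), by simp⟩)
  · have hs := hS s (hl s (by simp))
    have ht := hS t (hl t (by simp))
    have hu := hS u (hl u (by simp))
    simp only [List.sum_cons] at hlt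
    omega

lemma tm_le_one (n : ℕ) : tm n ≤ 1 :=
  Nat.lt_succ_iff.mp (Nat.mod_lt _ two_pos)

lemma tm_eq_zero_or_eq_one (n : ℕ) : tm n = 0 ∨ tm n = 1 :=
  Nat.le_one_iff_eq_zero_or_eq_one.mp (tm_le_one n)

lemma tm_two_mul (n : ℕ) : tm (2 * n) = tm n := by
  rcases Nat.eq_zero_or_pos n with rfl | hn
  · rfl
  · unfold tm
    rw [Nat.digits_def' one_lt_two (by omega), Nat.mul_mod_right, Nat.mul_div_cancel_left _ two_pos,
      List.sum_cons, zero_add]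

lemma tm_two_mul_add_one (n : ℕ) : tm (2 * n + 1) = (tm n + 1) % 2 := by
  unfold tm
  rw [Nat.digits_def' one_lt_two (by omega), List.sum_cons]
  have hmod : (2 * n + 1) % 2 = 1 := by omega
  have hdiv : (2 * n + 1) / 2 = n := by omega
  rw [hmod, hdiv]
  omega

lemma tm_two_mul_add_one_ne (n : ℕ) : tm (2 * n + 1) ≠ tm (2 * n) := by
  rw [tm_two_mul, tm_two_mul_add_one]
  have := tm_le_one n
  omega

lemma not_tm_eq_and_tm_eq (n : ℕ) : ¬(tm n = tm (n + 1) ∧ tm (n + 1) = tm (n + 2)) := by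
  rintro ⟨h01, h12⟩
  rcases Nat.even_or_odd' n with ⟨a, rfl | rfl⟩
  · exact tm_two_mul_add_one_ne a h01.symm
  · exact tm_two_mul_add_one_ne (a + 1) h12.symm

lemma exists_evilSeq_eq_add_two_mul (w : ℕ) : ∃ i ≤ 2, evilSeq (w / 2 + i) = w + 2 * i := by
  have hne := not_tm_eq_and_tm_eq (w / 2)
  have := tm_le_one (w / 2)
  have := tm_le_one (w / 2 + 1)
  have := tm_le_one (w / 2 + 2)
  obtain ⟨i, hi, hti⟩ : ∃ i ≤ 2, tm (w / 2 + i) = w % 2 := by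
    by_cases h0 : tm (w / 2) = w % 2
    · exact ⟨0, by omega, h0⟩
    by_cases h1 : tm (w / 2 + 1) = w % 2
    · exact ⟨1, by omega, h1⟩
    exact ⟨2, le_rfl, by omega⟩
  refine ⟨i, hi, ?_⟩
  unfold evilSeq
  omega

def evilFrom (m : ℕ) : Set ℕ := {x : ℕ | ∃ j, m ≤ j ∧ x = evilSeq j}

lemma two_mul_le_of_mem_evilFrom {m x : ℕ} (hx : x ∈ evilFrom m) : 2 * m ≤ x := by
  obtain ⟨j, hj, rfl⟩ := hx
  unfold evilSeq
  omega

lemma evilFrom_meets_triple {m w : ℕ} (hw : 2 * m ≤ w) : ∃ i ≤ 2, w + 2 * i ∈ evilFrom m := by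
  obtain ⟨i, hi, he⟩ := exists_evilSeq_eq_add_two_mul w
  exact ⟨i, hi, w / 2 + i, by omega, he.symm⟩

lemma add_mem_closure_evilFrom {m i j x : ℕ} (hi : m ≤ i) (hj : m ≤ j)
    (hx : 2 * i + tm i + (2 * j + tm j) = x) : x ∈ AddSubmonoid.closure (evilFrom m) :=
  hx ▸ add_mem (AddSubmonoid.subset_closure ⟨i, hi, rfl⟩)
    (AddSubmonoid.subset_closure ⟨j, hj, rfl⟩)

lemma mem_closure_evilFrom_of_progression {m v k : ℕ}
    (h0 : v ∈ AddSubmonoid.closure (evilFrom m)) (h2 : v + 2 ∈ AddSubmonoid.closure (evilFrom m))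
    (h4 : v + 4 ∈ AddSubmonoid.closure (evilFrom m)) (hk : 2 * m + v + 4 ≤ k) :
    k ∈ AddSubmonoid.closure (evilFrom m) :=
  AddSubmonoid.mem_of_meets_every_triple
    (fun _ hw => (evilFrom_meets_triple hw).imp fun _ ⟨hi, hmem⟩ =>
      ⟨hi, AddSubmonoid.subset_closure hmem⟩) h0 h2 h4 hk

/-- Here `4m + 4 = e_m + e_{m+1} + 1` is not representable, so no progression of pair sums starts
at or below `4m + 4`. -/
lemma mem_closure_evilFrom_of_tm_eq_zero_one_one {m k : ℕ} (t0 : tm m = 0) (t1 : tm (m + 1) = 1)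
    (t2 : tm (m + 2) = 1) (hk : 6 * m + 8 ≤ k) : k ∈ AddSubmonoid.closure (evilFrom m) := by
  have t3 : tm (m + 3) = 0 := by
    have : ¬(tm (m + 1) = tm (m + 2) ∧ tm (m + 2) = tm (m + 3)) := not_tm_eq_and_tm_eq (m + 1)
    have := tm_le_one (m + 3)
    omega
  have e01 := add_mem_closure_evilFrom (i := m) (j := m + 1) le_rfl (by omega) rfl
  rcases (by omega : k = 6 * m + 8 ∨ k = 6 * m + 9 ∨ 6 * m + 10 ≤ k) with rfl | rfl | hk
  · convert add_mem e01 (AddSubmonoid.subset_closure ⟨m + 2, by omega, rfl⟩) using 1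
    unfold evilSeq
    omega
  · convert add_mem e01 (AddSubmonoid.subset_closure ⟨m + 3, by omega, rfl⟩) using 1
    unfold evilSeq
    omega
  · refine mem_closure_evilFrom_of_progression (v := 4 * m + 6)
      (add_mem_closure_evilFrom (i := m) (j := m + 3) ?_ ?_ ?_)
      (add_mem_closure_evilFrom (i := m + 1) (j := m + 2) ?_ ?_ ?_)
      (add_mem_closure_evilFrom (i := m + 2) (j := m + 2) ?_ ?_ ?_) ?_ <;> omega

lemma mem_closure_evilFrom_of_le {m k : ℕ} (hk : 6 * m + 8 ≤ k) :
    k ∈ AddSubmonoid.closure (evilFrom m) := by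
  rcases tm_eq_zero_or_eq_one m with t0 | t0 <;> rcases tm_eq_zero_or_eq_one (m + 1) with t1 | t1
  · refine mem_closure_evilFrom_of_progression (v := 4 * m)
      (add_mem_closure_evilFrom (i := m) (j := m) ?_ ?_ ?_)
      (add_mem_closure_evilFrom (i := m) (j := m + 1) ?_ ?_ ?_)
      (add_mem_closure_evilFrom (i := m + 1) (j := m + 1) ?_ ?_ ?_) ?_ <;> omega
  · rcases tm_eq_zero_or_eq_one (m + 2) with t2 | t2
    · refine mem_closure_evilFrom_of_progression (v := 4 * m + 4)
        (add_mem_closure_evilFrom (i := m) (j := m + 2) ?_ ?_ ?_)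
        (add_mem_closure_evilFrom (i := m + 1) (j := m + 1) ?_ ?_ ?_)
        (add_mem_closure_evilFrom (i := m + 2) (j := m + 2) ?_ ?_ ?_) ?_ <;> omega
    · exact mem_closure_evilFrom_of_tm_eq_zero_one_one t0 t1 t2 hk
  · rcases tm_eq_zero_or_eq_one (m + 2) with t2 | t2
    · refine mem_closure_evilFrom_of_progression (v := 4 * m + 2)
        (add_mem_closure_evilFrom (i := m) (j := m) ?_ ?_ ?_)
        (add_mem_closure_evilFrom (i := m + 1) (j := m + 1) ?_ ?_ ?_)
        (add_mem_closure_evilFrom (i := m + 1) (j := m + 2) ?_ ?_ ?_) ?_ <;> omega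
    · refine mem_closure_evilFrom_of_progression (v := 4 * m + 2)
        (add_mem_closure_evilFrom (i := m) (j := m) ?_ ?_ ?_)
        (add_mem_closure_evilFrom (i := m + 1) (j := m + 1) ?_ ?_ ?_)
        (add_mem_closure_evilFrom (i := m) (j := m + 2) ?_ ?_ ?_) ?_ <;> omega
  · refine mem_closure_evilFrom_of_progression (v := 4 * m + 2)
      (add_mem_closure_evilFrom (i := m) (j := m) ?_ ?_ ?_)
      (add_mem_closure_evilFrom (i := m) (j := m + 1) ?_ ?_ ?_)
      (add_mem_closure_evilFrom (i := m + 1) (j := m + 1) ?_ ?_ ?_) ?_ <;> omega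

lemma four_mul_add_one_sub_tm_not_mem_closure {m : ℕ} (hm : 1 ≤ m) :
    4 * m + 1 - tm m ∉ AddSubmonoid.closure (evilFrom m) := by
  intro h
  have := tm_le_one m
  rcases AddSubmonoid.nat_mem_closure_of_lt_three_mul (fun _ => two_mul_le_of_mem_evilFrom) h
    (by omega) with h0 | ⟨j, hj, he⟩ | ⟨_, ⟨i, hi, rfl⟩, _, ⟨j, hj, rfl⟩, he⟩
  · omega
  · have := tm_le_one j
    unfold evilSeq at he
    obtain rfl : j = 2 * m := by omega
    rw [tm_two_mul] at he
    omega
  · have := tm_le_one i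
    have := tm_le_one j
    unfold evilSeq at he
    obtain ⟨rfl, rfl⟩ : i = m ∧ j = m := by omega
    omega

theorem frobenius_evil_bounds (m F : ℕ)
    (hF : FrobeniusNumber F {x : ℕ | ∃ j, m ≤ j ∧ x = evilSeq j}) :
    4 * m ≤ F ∧ F ≤ 6 * m + 7 := by
  obtain ⟨hF_not_mem, hF_max⟩ := hF
  constructor
  · rcases Nat.eq_zero_or_pos m with rfl | hm
    · omega
    · have := hF_max (four_mul_add_one_sub_tm_not_mem_closure hm)
      have := tm_le_one m
      omega
  · by_contra! h
    exact hF_not_mem (mem_closure_evilFrom_of_le (by omega))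
end

section
/- The limit of G_L(n)/n as n → ∞ equals 1 + √5, where G_L(n) is the Frobenius number of the tail {L_n, L_{n+1}, …} of the lower Wythoff sequence L_n = ⌊nφ⌋, φ = (1+√5)/2. -/
noncomputable def phi : ℝ := (1 + Real.sqrt 5) / 2

/-- The lower Wythoff sequence. -/
noncomputable def lw (n : ℕ) : ℕ := ⌊(n : ℝ) * phi⌋₊

/-!
Write `m φ = lw m + f m`, where `f = lwFract` is the fractional part. Since `1 < φ < 2`,
consecutive terms of `lw` differ by `1` or `2`, and by `2` exactly when `f m > 2 - φ`. The closure
of the tail `{lw j | j ≥ n}` contains no integer strictly between `lw m` and `lw m + 2 = lw (m + 1)`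
as long as `lw m + 1 < 2 lw n`, and such a gap of `2` occurs at `m ≈ 2n`; so `G n > (2n - 3) φ`.
Conversely, `lw (a + b) = lw a + lw b + 1` whenever `f (a + b) < f a`, and choosing `a ∈ [n, n + 2]`
with `f a > φ - 1` fills every gap beyond `lw (2n + 2)`; so `G n < (2n + 2) φ`.
-/

open Filter Topology

lemma irrational_phi : Irrational phi := Real.goldenRatio_irrational

lemma phi_pos : 0 < phi := Real.goldenRatio_pos

lemma three_halves_lt_phi : 3 / 2 < phi := by
  rw [phi]
  nlinarith [Real.sq_sqrt (show (0 : ℝ) ≤ 5 by norm_num), Real.sqrt_nonneg 5]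

lemma phi_lt_five_thirds : phi < 5 / 3 := by
  rw [phi]
  nlinarith [Real.sq_sqrt (show (0 : ℝ) ≤ 5 by norm_num), Real.sqrt_nonneg 5]

lemma lw_mono : Monotone lw := fun _ _ h =>
  Nat.floor_le_floor (mul_le_mul_of_nonneg_right (by exact_mod_cast h) phi_pos.le)

lemma lw_le_mul (m : ℕ) : (lw m : ℝ) ≤ m * phi :=
  Nat.floor_le (mul_nonneg m.cast_nonneg phi_pos.le)

lemma mul_lt_lw_add_one (m : ℕ) : m * phi < lw m + 1 :=
  Nat.lt_floor_add_one _

noncomputable def lwFract (m : ℕ) : ℝ := m * phi - lw m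

lemma lwFract_nonneg (m : ℕ) : 0 ≤ lwFract m :=
  sub_nonneg.mpr (lw_le_mul m)

lemma lwFract_lt_one (m : ℕ) : lwFract m < 1 := by
  have := mul_lt_lw_add_one m
  rw [lwFract]
  linarith

lemma lwFract_pos {m : ℕ} (hm : m ≠ 0) : 0 < lwFract m := by
  refine (lwFract_nonneg m).lt_of_ne fun h => ?_
  have hint : (m : ℝ) * phi = (lw m : ℕ) := by
    rw [lwFract] at h
    linarith
  exact (irrational_phi.natCast_mul hm).ne_nat _ hint

lemma lwFract_succ (m : ℕ) :
    lwFract (m + 1) = lwFract m + phi - ((lw (m + 1) : ℝ) - lw m) := by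
  rw [lwFract, lwFract]
  push_cast
  ring

lemma lw_succ_eq (m : ℕ) : lw (m + 1) = lw m + 1 ∨ lw (m + 1) = lw m + 2 := by
  have hstep := lwFract_succ m
  have := lwFract_nonneg m
  have := lwFract_lt_one m
  have := lwFract_nonneg (m + 1)
  have := lwFract_lt_one (m + 1)
  have := three_halves_lt_phi
  have := phi_lt_five_thirds
  have hlo : lw m < lw (m + 1) := by
    have : (lw m : ℝ) < lw (m + 1) := by linarith
    exact_mod_cast this
  have hhi : lw (m + 1) < lw m + 3 := by
    have : (lw (m + 1) : ℝ) < lw m + 3 := by linarith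
    exact_mod_cast this
  omega

lemma lw_succ_eq_add_two_iff (m : ℕ) : lw (m + 1) = lw m + 2 ↔ 2 - phi < lwFract m := by
  have hstep := lwFract_succ m
  constructor
  · intro h
    rw [h] at hstep
    push_cast at hstep
    linarith [lwFract_pos m.succ_ne_zero]
  · intro h
    refine (lw_succ_eq m).resolve_left fun h1 => ?_
    rw [h1] at hstep
    push_cast at hstep
    linarith [lwFract_lt_one (m + 1)]

lemma phi_sub_one_lt_lwFract_succ {m : ℕ} (hm : m ≠ 0) (h : lw (m + 1) = lw m + 1) :
    phi - 1 < lwFract (m + 1) := by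
  have hstep := lwFract_succ m
  rw [h] at hstep
  push_cast at hstep
  linarith [lwFract_pos hm]

lemma exists_lw_succ_eq_add_two {p : ℕ} (hp : p ≠ 0) :
    ∃ m, p ≤ m ∧ m ≤ p + 1 ∧ lw (m + 1) = lw m + 2 := by
  by_cases h : 2 - phi < lwFract p
  · exact ⟨p, le_rfl, p.le_succ, (lw_succ_eq_add_two_iff p).mpr h⟩
  · have h1 : lw (p + 1) = lw p + 1 :=
      (lw_succ_eq p).resolve_right fun h2 => h ((lw_succ_eq_add_two_iff p).mp h2)
    have := phi_sub_one_lt_lwFract_succ hp h1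
    have := three_halves_lt_phi
    exact ⟨p + 1, p.le_succ, le_rfl, (lw_succ_eq_add_two_iff _).mpr (by linarith)⟩

lemma exists_phi_sub_one_lt_lwFract {n : ℕ} (hn : n ≠ 0) :
    ∃ a, n ≤ a ∧ a ≤ n + 2 ∧ phi - 1 < lwFract a := by
  by_cases hfn : phi - 1 < lwFract n
  · exact ⟨n, le_rfl, by omega, hfn⟩
  rcases lw_succ_eq n with h1 | h2
  · exact ⟨n + 1, by omega, by omega, phi_sub_one_lt_lwFract_succ hn h1⟩
  · -- after a gap of `2` the fractional part drops below `2 - φ`, forcing a gap of `1`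
    have hstep := lwFract_succ n
    rw [h2] at hstep
    push_cast at hstep
    have hlt : ¬ 2 - phi < lwFract (n + 1) := by linarith [phi_lt_five_thirds]
    have h1 : lw (n + 2) = lw (n + 1) + 1 :=
      (lw_succ_eq (n + 1)).resolve_right fun h => hlt ((lw_succ_eq_add_two_iff _).mp h)
    exact ⟨n + 2, by omega, le_rfl, phi_sub_one_lt_lwFract_succ n.succ_ne_zero h1⟩

lemma lw_add_add_one {a b : ℕ} (hb : b ≠ 0) (h : lwFract (a + b) < lwFract a) :
    lw a + lw b + 1 = lw (a + b) := by
  have key : (lw (a + b) : ℝ) - lw a - lw b = lwFract a + lwFract b - lwFract (a + b) := by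
    rw [lwFract, lwFract, lwFract]
    push_cast
    ring
  have := lwFract_pos hb
  have := lwFract_nonneg (a + b)
  have := lwFract_lt_one a
  have := lwFract_lt_one b
  have hlo : lw a + lw b < lw (a + b) := by
    have : ((lw a + lw b : ℕ) : ℝ) < lw (a + b) := by push_cast; linarith
    exact_mod_cast this
  have hhi : lw (a + b) < lw a + lw b + 2 := by
    have : (lw (a + b) : ℝ) < ((lw a + lw b + 2 : ℕ) : ℝ) := by push_cast; linarith
    exact_mod_cast this
  omega

lemma lw_le_two_mul_lw {m n : ℕ} (h : m < 2 * n) : lw m ≤ 2 * lw n := by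
  have hm : (m : ℝ) + 1 ≤ 2 * n := by exact_mod_cast h
  have := lw_le_mul m
  have := mul_lt_lw_add_one n
  have := three_halves_lt_phi
  have : (lw m : ℝ) < 2 * lw n + 1 := by nlinarith
  exact Nat.lt_succ_iff.mp (by exact_mod_cast this)

lemma lw_ne_lw_add_one {m : ℕ} (h : lw (m + 1) = lw m + 2) (j : ℕ) : lw j ≠ lw m + 1 := by
  rcases le_or_gt j m with hj | hj
  · have := lw_mono hj
    omega
  · have := lw_mono (show m + 1 ≤ j from hj)
    omega

lemma exists_eq_lw_or_eq_lw_add_one {m₀ k : ℕ} (hk : lw m₀ ≤ k) :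
    ∃ m, m₀ ≤ m ∧ (k = lw m ∨ (k = lw m + 1 ∧ lw (m + 1) = lw m + 2)) := by
  induction k, hk using Nat.le_induction with
  | base => exact ⟨m₀, le_rfl, Or.inl rfl⟩
  | succ k _ ih =>
    obtain ⟨m, hm, rfl | ⟨rfl, hgap⟩⟩ := ih
    · rcases lw_succ_eq m with h1 | h2
      · exact ⟨m + 1, by omega, Or.inl h1.symm⟩
      · exact ⟨m, hm, Or.inr ⟨rfl, h2⟩⟩
    · exact ⟨m + 1, by omega, Or.inl hgap.symm⟩

lemma Nat.eq_zero_or_mem_of_mem_closure_of_lt_two_mul {S : Set ℕ} {c k : ℕ}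
    (hS : ∀ x ∈ S, c ≤ x) (hk : k ∈ AddSubmonoid.closure S) (hlt : k < 2 * c) :
    k = 0 ∨ k ∈ S := by
  have key : k = 0 ∨ k ∈ S ∨ 2 * c ≤ k := by
    clear hlt
    induction hk using AddSubmonoid.closure_induction with
    | mem x hx => exact Or.inr (Or.inl hx)
    | zero => exact Or.inl rfl
    | add x y _ _ hx hy =>
      have hc {z : ℕ} (hz : z = 0 ∨ z ∈ S ∨ 2 * c ≤ z) : z = 0 ∨ c ≤ z := by
        rcases hz with hz | hz | hz
        · exact Or.inl hz
        · exact Or.inr (hS z hz)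
        · omega
      rcases hc hx with rfl | hcx
      · simpa using hy
      rcases hc hy with rfl | hcy
      · simpa using hx
      omega
  rcases key with h | h | h
  · exact Or.inl h
  · exact Or.inr h
  · omega

def lwTail (n : ℕ) : Set ℕ := {x : ℕ | ∃ j, n ≤ j ∧ x = lw j}

lemma lw_mem_closure_lwTail {n j : ℕ} (hj : n ≤ j) : lw j ∈ AddSubmonoid.closure (lwTail n) :=
  AddSubmonoid.subset_closure ⟨j, hj, rfl⟩

lemma mem_closure_lwTail {n k : ℕ} (hn : n ≠ 0) (hk : lw (2 * n + 2) ≤ k) :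
    k ∈ AddSubmonoid.closure (lwTail n) := by
  obtain ⟨m, hm, rfl | ⟨rfl, hgap⟩⟩ := exists_eq_lw_or_eq_lw_add_one hk
  · exact lw_mem_closure_lwTail (by omega)
  obtain ⟨a, han, ha, hfa⟩ := exists_phi_sub_one_lt_lwFract hn
  have hfm : lwFract (m + 1) < phi - 1 := by
    have hstep := lwFract_succ m
    rw [hgap] at hstep
    push_cast at hstep
    linarith [lwFract_lt_one m]
  have hsum := lw_add_add_one (a := a) (b := m + 1 - a) (by omega)
    (by rw [Nat.add_sub_cancel' (by omega)]; linarith)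
  rw [Nat.add_sub_cancel' (by omega)] at hsum
  rw [show lw m + 1 = lw a + lw (m + 1 - a) by omega]
  exact add_mem (lw_mem_closure_lwTail han) (lw_mem_closure_lwTail (by omega))

lemma exists_not_mem_closure_lwTail {n : ℕ} (hn : 3 ≤ n) :
    ∃ k ∉ AddSubmonoid.closure (lwTail n), (2 * n - 3) * phi < k := by
  obtain ⟨m, hm, hm', hgap⟩ := exists_lw_succ_eq_add_two (p := 2 * n - 3) (by omega)
  refine ⟨lw m + 1, fun hmem => ?_, ?_⟩
  · have hlt : lw m + 1 < 2 * lw n := by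
      have := lw_le_two_mul_lw (m := m + 1) (n := n) (by omega)
      omega
    rcases Nat.eq_zero_or_mem_of_mem_closure_of_lt_two_mul
        (c := lw n) (by rintro _ ⟨j, hj, rfl⟩; exact lw_mono hj) hmem hlt with h | ⟨j, -, hj⟩
    · omega
    · exact lw_ne_lw_add_one hgap j hj.symm
  · have : (2 * n : ℝ) - 3 ≤ m := by
      have : 2 * n ≤ m + 3 := by omega
      have : (2 * n : ℝ) ≤ m + 3 := by exact_mod_cast this
      linarith
    have := mul_lt_lw_add_one m
    push_cast
    nlinarith [phi_pos]

lemma abs_sub_le_of_frobeniusNumber_lwTail {n g : ℕ} (hn : 3 ≤ n)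
    (hg : FrobeniusNumber g (lwTail n)) : |(g : ℝ) - 2 * phi * n| ≤ 5 := by
  have hupper : g < lw (2 * n + 2) := by
    by_contra! h
    exact hg.1 (mem_closure_lwTail (by omega) h)
  obtain ⟨k, hk, hkgt⟩ := exists_not_mem_closure_lwTail hn
  have hlower : (k : ℝ) ≤ g := by exact_mod_cast hg.2 hk
  have hupper' : (g : ℝ) < lw (2 * n + 2) := by exact_mod_cast hupper
  have hlw := lw_le_mul (2 * n + 2)
  push_cast at hlw
  have := phi_lt_five_thirds
  rw [abs_le]
  constructor <;> nlinarith

lemma tendsto_div_natCast_of_abs_sub_mul_le {u : ℕ → ℝ} {c C : ℝ}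
    (h : ∀ᶠ n in atTop, |u n - c * n| ≤ C) : Tendsto (fun n => u n / n) atTop (𝓝 c) := by
  rw [← tendsto_sub_nhds_zero_iff]
  refine squeeze_zero_norm' ?_ (tendsto_const_div_atTop_nhds_zero_nat C)
  filter_upwards [h, eventually_ne_atTop 0] with n hn hn0
  have hn0' : (n : ℝ) ≠ 0 := Nat.cast_ne_zero.mpr hn0
  rw [Real.norm_eq_abs, show u n / n - c = (u n - c * n) / n by field_simp, abs_div,
    Nat.abs_cast]
  gcongr

theorem frobenius_lower_wythoff_limit (G : ℕ → ℕ)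
    (hG : ∀ n, 1 ≤ n → FrobeniusNumber (G n) {x : ℕ | ∃ j, n ≤ j ∧ x = lw j}) :
    Filter.Tendsto (fun n : ℕ => (G n : ℝ) / n) Filter.atTop
      (nhds (1 + Real.sqrt 5)) := by
  rw [show 1 + Real.sqrt 5 = 2 * phi by rw [phi]; ring]
  refine tendsto_div_natCast_of_abs_sub_mul_le (C := 5) ?_
  filter_upwards [eventually_ge_atTop 3] with n hn
  exact abs_sub_le_of_frobeniusNumber_lwTail hn (hG n (by omega))
end

section
/- For all n ≥ 1, the Frobenius number G_U(n) of the set {U_n, U_{n+1}, U_{n+2}, …} satisfies −5 ≤ G_U(n) − 3U_n ≤ 20, where U_n = ⌊nφ²⌋ and φ = (1+√5)/2. -/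
/-- The upper Wythoff sequence. -/
noncomputable def uw (n : ℕ) : ℕ := ⌊(n : ℝ) * phi ^ 2⌋₊

/-!
Write `θ m = {m φ²}` (`uwFrac m`), so that `U m = m φ² - θ m`. A sum of `m` terms `U j` whose
indices add up to `S` lies in `(S φ² - m, S φ²]`; it equals `U S - q`, where `q` is the number
of carries in adding up the fractional parts `θ j`.

Lower bound: a number `3 U n + w` with `-5 ≤ w ≤ -1` can only be a sum of at most two terms,
which forces `3 θ n + s φ² ∈ [w, w + 2)` for `s = S - 3 n`. Consecutive points of
`3 θ n + φ² ℤ` are `φ² > 2` apart, so one of these windows is missed.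

Upper bound: for `k ≥ 3 U n + 21` pick `T` with `U (T - 1) < k ≤ U T`; then `U T - k ≤ 2`, and
`U T - 1`, `U T - 2` are sums of two or three terms `U j`, `j ≥ n`, with one resp. two carries.
Suitable indices come from a case analysis of the rotation `θ (n + i) = {θ n + i φ}`; the
irrationality of `φ` rules out the boundary cases.
-/

lemma phi_sq : phi ^ 2 = phi + 1 := Real.goldenRatio_sq

lemma phi_gt_d3 : 1.618 < phi := by
  have : 2.236 < Real.sqrt 5 := by rw [Real.lt_sqrt] <;> norm_num
  unfold phi; linarith

lemma phi_lt_d4 : phi < 1.6181 := by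
  have : Real.sqrt 5 < 2.2362 := by rw [Real.sqrt_lt'] <;> norm_num
  unfold phi; linarith

lemma fract_eq_sub_of_le_of_lt {r : ℝ} {c : ℤ} (h₁ : (c : ℝ) ≤ r) (h₂ : r < c + 1) :
    Int.fract r = r - c := by
  rw [Int.fract, Int.floor_eq_iff.mpr ⟨h₁, h₂⟩]

lemma add_succ_eq_of_lt_sub_lt {A B q : ℕ} (h₁ : (q : ℝ) < B - A) (h₂ : (B : ℝ) - A < q + 2) :
    B = A + (q + 1) := by
  have h₁' : (q : ℤ) < B - A := by exact_mod_cast h₁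
  have h₂' : (B : ℤ) - A < q + 2 := by exact_mod_cast h₂
  omega

lemma exists_lt_le_succ {f : ℕ → ℕ} {k : ℕ} (h₀ : f 0 < k) (hk : ∃ t, k ≤ f t) :
    ∃ t, f t < k ∧ k ≤ f (t + 1) := by
  obtain ⟨t, ht⟩ : ∃ t, Nat.find hk = t + 1 :=
    Nat.exists_eq_succ_of_ne_zero fun h => by have := Nat.find_spec hk; rw [h] at this; omega
  exact ⟨t, not_le.mp (Nat.find_min hk (by omega)), ht ▸ Nat.find_spec hk⟩

/-- Here `m` counts the summands and `S` is the sum of their indices. -/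
lemma exists_of_mem_closure_floor_mul {α : ℝ} (hα : 0 ≤ α) {n k : ℕ}
    (hk : k ∈ AddSubmonoid.closure {x | ∃ j, n ≤ j ∧ x = ⌊(j : ℝ) * α⌋₊}) :
    k = 0 ∨ ∃ m S : ℕ, m * ⌊(n : ℝ) * α⌋₊ ≤ k ∧ (k : ℝ) ≤ S * α ∧ S * α < k + m := by
  induction hk using AddSubmonoid.closure_induction with
  | mem x hx =>
    obtain ⟨j, hj, rfl⟩ := hx
    exact .inr ⟨1, j, by simpa using Nat.floor_mono (by gcongr), Nat.floor_le (by positivity),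
      by simpa using Nat.lt_floor_add_one _⟩
  | zero => exact .inl rfl
  | add x y _ _ hx hy =>
    rcases hx with rfl | ⟨m, S, h₁, h₂, h₃⟩
    · simpa using hy
    rcases hy with rfl | ⟨m', S', h₁', h₂', h₃'⟩
    · exact .inr ⟨m, S, h₁, h₂, h₃⟩
    exact .inr ⟨m + m', S + S', by rw [add_mul]; omega, by push_cast; linarith,
      by push_cast; linarith⟩

lemma exists_phi_sub_one_lt_fract {x : ℝ} (hx₀ : 0 ≤ x) (hx₁ : x < 1)
    (hx : ∀ a b : ℤ, b ≤ 0 → x ≠ a + b * phi) :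
    ∃ i : ℕ, i ≤ 2 ∧ phi - 1 < Int.fract (x + i * phi) := by
  have := phi_gt_d3; have := phi_lt_d4
  rcases (hx 0 0 le_rfl).lt_or_gt with h₀ | h₀
  · push_cast at h₀; linarith
  rcases (hx 2 (-1) (by norm_num)).lt_or_gt with h₁ | h₁
  · refine ⟨1, by norm_num, ?_⟩
    rw [fract_eq_sub_of_le_of_lt (c := 1)] <;> push_cast at * <;> linarith
  rcases lt_or_ge x 0.7 with h₂ | h₂
  · refine ⟨2, by norm_num, ?_⟩
    rw [fract_eq_sub_of_le_of_lt (c := 3)] <;> push_cast at * <;> linarith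
  · refine ⟨0, by norm_num, ?_⟩
    rw [fract_eq_sub_of_le_of_lt (c := 0)] <;> push_cast <;> linarith

/-- The rational cut points below are arbitrary inside overlaps of the ranges where consecutive
pairs `(i, j)` work; only at the three points `a + b φ` do these ranges merely touch. -/
lemma exists_phi_lt_fract_add_fract {x : ℝ} (hx₀ : 0 ≤ x) (hx₁ : x < 1)
    (hx : ∀ a b : ℤ, b ≤ 0 → x ≠ a + b * phi) :
    ∃ i j : ℕ, i + j ≤ 9 ∧ phi < Int.fract (x + i * phi) + Int.fract (x + j * phi) := by
  have := phi_gt_d3; have := phi_lt_d4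
  have pair : ∀ (i j : ℕ) (c d : ℤ), i + j ≤ 9 → (c : ℝ) ≤ x + i * phi → x + i * phi < c + 1 →
      (d : ℝ) ≤ x + j * phi → x + j * phi < d + 1 → phi < x + i * phi - c + (x + j * phi - d) →
      ∃ i j : ℕ, i + j ≤ 9 ∧ phi < Int.fract (x + i * phi) + Int.fract (x + j * phi) :=
    fun i j c d hij hc hc' hd hd' h =>
      ⟨i, j, hij, by rwa [fract_eq_sub_of_le_of_lt hc hc', fract_eq_sub_of_le_of_lt hd hd']⟩
  rcases (hx 5 (-3) (by norm_num)).lt_or_gt with h₁ | h₁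
  · refine pair 3 3 4 4 (by norm_num) ?_ ?_ ?_ ?_ ?_ <;> push_cast at * <;> linarith
  rcases lt_or_ge x 0.25 with h₂ | h₂
  · refine pair 1 6 1 9 (by norm_num) ?_ ?_ ?_ ?_ ?_ <;> push_cast at * <;> linarith
  rcases lt_or_ge x 0.35 with h₃ | h₃
  · refine pair 1 1 1 1 (by norm_num) ?_ ?_ ?_ ?_ ?_ <;> push_cast at * <;> linarith
  rcases (hx 7 (-4) (by norm_num)).lt_or_gt with h₄ | h₄
  · refine pair 4 4 6 6 (by norm_num) ?_ ?_ ?_ ?_ ?_ <;> push_cast at * <;> linarith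
  rcases lt_or_ge x 0.6 with h₅ | h₅
  · refine pair 2 7 3 11 (by norm_num) ?_ ?_ ?_ ?_ ?_ <;> push_cast at * <;> linarith
  rcases (hx 4 (-2) (by norm_num)).lt_or_gt with h₆ | h₆
  · refine pair 2 2 3 3 (by norm_num) ?_ ?_ ?_ ?_ ?_ <;> push_cast at * <;> linarith
  rcases lt_or_ge x 0.85 with h₇ | h₇
  · refine pair 0 5 0 8 (by norm_num) ?_ ?_ ?_ ?_ ?_ <;> push_cast at * <;> linarith
  · refine pair 0 0 0 0 (by norm_num) ?_ ?_ ?_ ?_ ?_ <;> push_cast at * <;> linarith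

lemma floor_sub_phi_sq_add_two_le (u : ℝ) :
    ⌊u - phi ^ 2⌋ + 2 ≤ ⌊u⌋ ∧ ⌊u⌋ ≤ ⌊u - phi ^ 2⌋ + 3 := by
  have : ⌊phi ^ 2⌋ = 2 := by
    rw [Int.floor_eq_iff, phi_sq]; constructor <;> push_cast <;> linarith [phi_gt_d3, phi_lt_d4]
  have h₁ := Int.le_floor_add (u - phi ^ 2) (phi ^ 2)
  have h₂ := Int.le_floor_add_floor (u - phi ^ 2) (phi ^ 2)
  rw [sub_add_cancel] at h₁ h₂
  omega

lemma floor_sub_two_phi_sq_add_five_le (u : ℝ) : ⌊u - phi ^ 2 - phi ^ 2⌋ + 5 ≤ ⌊u⌋ := by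
  have : ⌊2 * phi ^ 2⌋ = 5 := by
    rw [Int.floor_eq_iff, phi_sq]; constructor <;> push_cast <;> linarith [phi_gt_d3, phi_lt_d4]
  have h := Int.le_floor_add (u - phi ^ 2 - phi ^ 2) (2 * phi ^ 2)
  rw [show u - phi ^ 2 - phi ^ 2 + 2 * phi ^ 2 = u by ring] at h
  omega

lemma forall_notMem_Ico_of_lt_of_le {y : ℝ} {t w : ℤ} (h₁ : y + (t - 1) * phi ^ 2 < w)
    (h₂ : w + 2 ≤ y + t * phi ^ 2) : ∀ s : ℤ, y + s * phi ^ 2 ∉ Set.Ico (w : ℝ) (w + 2) := by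
  rintro s ⟨hs₁, hs₂⟩
  rcases le_or_gt t s with hs | hs
  · have : (t : ℝ) ≤ s := by exact_mod_cast hs
    nlinarith [phi_sq, phi_gt_d3]
  · have : (s : ℝ) ≤ t - 1 := by exact_mod_cast Int.le_sub_one_of_lt hs
    nlinarith [phi_sq, phi_gt_d3]

lemma exists_forall_notMem_Ico {y : ℝ} (hy₀ : 0 ≤ y) (hy₃ : y < 3) :
    ∃ w : ℤ, -5 ≤ w ∧ w ≤ -1 ∧ ∀ s : ℤ, y + s * phi ^ 2 ∉ Set.Ico (w : ℝ) (w + 2) := by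
  have h₀ : 0 ≤ ⌊y⌋ := Int.floor_nonneg.mpr hy₀
  have h₀' : ⌊y⌋ ≤ 2 := Int.le_of_lt_add_one (Int.floor_lt.mpr (by push_cast; linarith))
  have s₁ := floor_sub_phi_sq_add_two_le y
  have s₂ := floor_sub_phi_sq_add_two_le (y - phi ^ 2)
  have s₃ := floor_sub_phi_sq_add_two_le (y - phi ^ 2 - phi ^ 2)
  have d₁ := floor_sub_two_phi_sq_add_five_le y
  have d₂ := floor_sub_two_phi_sq_add_five_le (y - phi ^ 2)
  have f₀ := Int.floor_le y
  have f₁ := Int.floor_le (y - phi ^ 2)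
  have f₂ := Int.floor_le (y - phi ^ 2 - phi ^ 2)
  have g₁ := Int.lt_floor_add_one (y - phi ^ 2)
  have g₂ := Int.lt_floor_add_one (y - phi ^ 2 - phi ^ 2)
  have g₃ := Int.lt_floor_add_one (y - phi ^ 2 - phi ^ 2 - phi ^ 2)
  -- The floors jump by 2 or 3 per step, never by 2 twice in a row; after a jump of 3 onto
  -- `⌊y + t φ²⌋` the window `[⌊y + t φ²⌋ - 2, ⌊y + t φ²⌋)` is empty.
  by_cases c₀ : ⌊y - phi ^ 2⌋ + 3 = ⌊y⌋ ∧ ⌊y⌋ ≤ 1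
  · refine ⟨⌊y⌋ - 2, by omega, by omega, forall_notMem_Ico_of_lt_of_le (t := 0) ?_ ?_⟩ <;>
    · have : ((⌊y - phi ^ 2⌋ : ℤ) : ℝ) + 3 = ⌊y⌋ := by exact_mod_cast c₀.1
      push_cast; linarith
  by_cases c₁ : ⌊y - phi ^ 2 - phi ^ 2⌋ + 3 = ⌊y - phi ^ 2⌋
  · refine ⟨⌊y - phi ^ 2⌋ - 2, by omega, by omega,
      forall_notMem_Ico_of_lt_of_le (t := -1) ?_ ?_⟩ <;>
    · have : ((⌊y - phi ^ 2 - phi ^ 2⌋ : ℤ) : ℝ) + 3 = ⌊y - phi ^ 2⌋ := by exact_mod_cast c₁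
      push_cast; linarith
  · have c₂ : ⌊y - phi ^ 2 - phi ^ 2 - phi ^ 2⌋ + 3 = ⌊y - phi ^ 2 - phi ^ 2⌋ := by omega
    refine ⟨⌊y - phi ^ 2 - phi ^ 2⌋ - 2, by omega, by omega,
      forall_notMem_Ico_of_lt_of_le (t := -2) ?_ ?_⟩ <;>
    · have : ((⌊y - phi ^ 2 - phi ^ 2 - phi ^ 2⌋ : ℤ) : ℝ) + 3 = ⌊y - phi ^ 2 - phi ^ 2⌋ := by
        exact_mod_cast c₂
      push_cast; linarith

noncomputable def uwFrac (m : ℕ) : ℝ := Int.fract ((m : ℝ) * phi ^ 2)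

lemma uwFrac_nonneg (m : ℕ) : 0 ≤ uwFrac m := Int.fract_nonneg _

lemma uwFrac_lt_one (m : ℕ) : uwFrac m < 1 := Int.fract_lt_one _

lemma uw_add_uwFrac (m : ℕ) : (uw m : ℝ) + uwFrac m = m * phi ^ 2 := by
  rw [uw, uwFrac, natCast_floor_eq_intCast_floor (by positivity), Int.floor_add_fract]

lemma uwFrac_add (m i : ℕ) : uwFrac (m + i) = Int.fract (uwFrac m + i * phi) := by
  have : ((m + i : ℕ) : ℝ) * phi ^ 2 = uwFrac m + i * phi + (⌊(m : ℝ) * phi ^ 2⌋ + i : ℤ) := by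
    rw [uwFrac, Int.fract, phi_sq]; push_cast; ring
  rw [uwFrac, this, Int.fract_add_intCast]

lemma uwFrac_ne {n : ℕ} {b : ℤ} (hb : b < n) (a : ℤ) : uwFrac n ≠ a + b * phi := by
  intro h
  have key : ((n - b : ℤ) : ℝ) * phi = (a - n + uw n : ℤ) := by
    have := uw_add_uwFrac n
    rw [phi_sq] at this
    push_cast; linarith
  exact (Real.goldenRatio_irrational.intCast_mul (by omega)).ne_int _ key

lemma uw_mono : Monotone uw := fun _ _ h => Nat.floor_mono (by gcongr)

lemma two_mul_le_uw (m : ℕ) : 2 * m ≤ uw m :=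
  Nat.le_floor (by push_cast; nlinarith [phi_sq, phi_gt_d3, (Nat.cast_nonneg m : (0 : ℝ) ≤ m)])

lemma uw_succ_le (m : ℕ) : uw (m + 1) ≤ uw m + 3 := by
  have h := uw_add_uwFrac m
  have h' := uw_add_uwFrac (m + 1)
  have : (uw (m + 1) : ℝ) < uw m + 4 := by
    push_cast at h'
    linarith [uwFrac_nonneg (m + 1), uwFrac_lt_one m, phi_lt_d4, phi_sq]
  exact_mod_cast Nat.lt_succ_iff.mp (by exact_mod_cast this)

lemma uwFrac_succ_lt_of_le {m : ℕ} (h : uw m + 3 ≤ uw (m + 1)) : uwFrac (m + 1) < phi - 1 := by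
  have h₁ := uw_add_uwFrac m
  have h₂ := uw_add_uwFrac (m + 1)
  have h₃ : (uw m : ℝ) + 3 ≤ uw (m + 1) := by exact_mod_cast h
  push_cast at h₂
  linarith [uwFrac_lt_one m, phi_sq]

lemma uw_three_mul_add_seven_le (n : ℕ) : uw (3 * n + 7) ≤ 3 * uw n + 21 := by
  have h := uw_add_uwFrac n
  have h' := uw_add_uwFrac (3 * n + 7)
  have : (uw (3 * n + 7) : ℝ) < 3 * uw n + 22 := by
    push_cast at h'
    linarith [uwFrac_nonneg (3 * n + 7), uwFrac_lt_one n, phi_lt_d4, phi_sq]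
  exact Nat.lt_succ_iff.mp (by exact_mod_cast this)

lemma uw_add_eq_of_uwFrac_lt {a b : ℕ} (h : uwFrac (a + b) < uwFrac a) :
    uw (a + b) = uw a + uw b + 1 := by
  refine add_succ_eq_of_lt_sub_lt (q := 0) ?_ ?_ <;>
  · have := uw_add_uwFrac a; have := uw_add_uwFrac b; have := uw_add_uwFrac (a + b)
    push_cast at *
    linarith [uwFrac_nonneg b, uwFrac_lt_one b, uwFrac_lt_one a, uwFrac_nonneg (a + b)]

lemma uw_add_add_eq {a b c q : ℕ} (h₁ : q + uwFrac (a + b + c) < uwFrac a + uwFrac b)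
    (h₂ : uwFrac a + uwFrac b ≤ q + uwFrac (a + b + c) + 1) :
    uw (a + b + c) = uw a + uw b + uw c + (q + 1) := by
  refine add_succ_eq_of_lt_sub_lt ?_ ?_ <;>
  · have := uw_add_uwFrac a; have := uw_add_uwFrac b; have := uw_add_uwFrac c
    have := uw_add_uwFrac (a + b + c)
    push_cast at *
    linarith [uwFrac_nonneg c, uwFrac_lt_one c]

def uwFrom (n : ℕ) : Set ℕ := {x | ∃ j, n ≤ j ∧ x = uw j}

lemma uw_mem_closure {n j : ℕ} (h : n ≤ j) : uw j ∈ AddSubmonoid.closure (uwFrom n) :=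
  AddSubmonoid.subset_closure ⟨j, h, rfl⟩

lemma exists_notMem_closure {n : ℕ} (hn : 1 ≤ n) :
    ∃ N : ℕ, 3 * uw n ≤ N + 5 ∧ N ∉ AddSubmonoid.closure (uwFrom n) := by
  obtain ⟨w, hw₅, hw₁, hmiss⟩ := exists_forall_notMem_Ico (y := 3 * uwFrac n)
    (by linarith [uwFrac_nonneg n]) (by linarith [uwFrac_lt_one n])
  have hU : 2 ≤ uw n := le_trans (by omega) (two_mul_le_uw n)
  have hN : (((3 * uw n : ℕ) + w).toNat : ℤ) = 3 * uw n + w := Int.toNat_of_nonneg (by omega)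
  refine ⟨(3 * uw n + w).toNat, by omega, fun hmem => ?_⟩
  rcases exists_of_mem_closure_floor_mul (α := phi ^ 2) (by positivity) hmem
    with h0 | ⟨m, S, hm, hlo, hhi⟩
  · omega
  have hm₂ : m ≤ 2 := by
    by_contra! h
    have : 3 * uw n ≤ m * uw n := Nat.mul_le_mul_right _ h
    change m * uw n ≤ _ at hm
    omega
  have hN' : ((3 * uw n + w).toNat : ℝ) = 3 * uw n + w := by exact_mod_cast hN
  have hm' : (m : ℝ) ≤ 2 := by exact_mod_cast hm₂
  apply hmiss (S - 3 * n)
  have := uw_add_uwFrac n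
  constructor <;> push_cast <;> linarith

lemma uw_sub_one_mem_closure {n T : ℕ} (hn : 1 ≤ n) (hT : 3 * n + 4 ≤ T) :
    uw T - 1 ∈ AddSubmonoid.closure (uwFrom n) := by
  obtain ⟨i, hi, hfrac⟩ := exists_phi_sub_one_lt_fract (uwFrac_nonneg n) (uwFrac_lt_one n)
    fun a b hb => uwFrac_ne (by omega) a
  rw [← uwFrac_add] at hfrac
  have := phi_gt_d3
  rcases lt_or_ge (uwFrac T) (uwFrac (n + i)) with h | h
  · have e : n + i + (T - (n + i)) = T := by omega
    have hsum := uw_add_eq_of_uwFrac_lt (b := T - (n + i)) (by rwa [e])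
    rw [e] at hsum
    rw [hsum, Nat.add_sub_cancel]
    exact add_mem (uw_mem_closure (by omega)) (uw_mem_closure (by omega))
  · have e : n + i + (n + i) + (T - 2 * (n + i)) = T := by omega
    have hsum := uw_add_add_eq (q := 0) (c := T - 2 * (n + i))
      (by rw [e]; push_cast; linarith [uwFrac_lt_one T])
      (by rw [e]; push_cast; linarith [uwFrac_lt_one (n + i)])
    rw [e] at hsum
    rw [hsum, Nat.add_sub_cancel]
    exact add_mem (add_mem (uw_mem_closure (by omega)) (uw_mem_closure (by omega)))
      (uw_mem_closure (by omega))

lemma uw_sub_two_mem_closure {n a b c : ℕ} (ha : n ≤ a) (hb : n ≤ b) (hc : n ≤ c)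
    (h : 1 + uwFrac (a + b + c) < uwFrac a + uwFrac b) :
    uw (a + b + c) - 2 ∈ AddSubmonoid.closure (uwFrom n) := by
  have hsum := uw_add_add_eq (q := 1) (by exact_mod_cast h)
    (by push_cast; linarith [uwFrac_lt_one a, uwFrac_lt_one b, uwFrac_nonneg (a + b + c)])
  rw [hsum, Nat.add_sub_cancel]
  exact add_mem (add_mem (uw_mem_closure ha) (uw_mem_closure hb)) (uw_mem_closure hc)

lemma exists_phi_lt_uwFrac_add_uwFrac {n : ℕ} (hn : 1 ≤ n) :
    ∃ a b, n ≤ a ∧ n ≤ b ∧ a + b ≤ 2 * n + 9 ∧ phi < uwFrac a + uwFrac b := by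
  obtain ⟨i, j, hij, h⟩ := exists_phi_lt_fract_add_fract (uwFrac_nonneg n) (uwFrac_lt_one n)
    fun a b hb => uwFrac_ne (by omega) a
  rw [← uwFrac_add, ← uwFrac_add] at h
  exact ⟨n + i, n + j, by omega, by omega, by omega, h⟩

lemma mem_closure_of_le {n k : ℕ} (hn : 1 ≤ n) (hk : 3 * uw n + 21 ≤ k) :
    k ∈ AddSubmonoid.closure (uwFrom n) := by
  obtain ⟨t, hlt, hle⟩ := exists_lt_le_succ (f := uw) (k := k) (by simp [uw]; omega)
    ⟨k, le_trans (by omega) (two_mul_le_uw k)⟩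
  by_cases h₀ : uw (t + 1) = k
  · rw [← h₀]
    exact uw_mem_closure (le_of_not_gt fun h => by have := uw_mono h.le; omega)
  have hT : 3 * n + 8 ≤ t + 1 := le_of_not_gt fun h => by
    have := uw_mono (Nat.lt_succ_iff.mp h); have := uw_three_mul_add_seven_le n; omega
  obtain hr | hr : uw (t + 1) = k + 1 ∨ uw (t + 1) = k + 2 := by have := uw_succ_le t; omega
  · rw [show k = uw (t + 1) - 1 by omega]
    exact uw_sub_one_mem_closure hn (by omega)
  have hfrac := uwFrac_succ_lt_of_le (m := t) (by omega)
  rw [show k = uw (t + 1) - 2 by omega]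
  rcases hT.eq_or_lt with hT | hT
  · have e : n + n + (n + 8) = t + 1 := by omega
    rw [← e] at hfrac hr ⊢
    refine uw_sub_two_mem_closure le_rfl le_rfl (by omega) ?_
    have h₁ := uw_add_uwFrac n
    have h₂ := uw_add_uwFrac (n + n + (n + 8))
    have h₃ : (3 * uw n + 21 : ℝ) ≤ k := by exact_mod_cast hk
    have h₄ : (uw (n + n + (n + 8)) : ℝ) = k + 2 := by exact_mod_cast hr
    push_cast at h₂
    linarith [phi_lt_d4, phi_sq, uwFrac_lt_one (n + n + (n + 8))]
  · obtain ⟨a, b, ha, hb, hab, hphi⟩ := exists_phi_lt_uwFrac_add_uwFrac hn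
    have e : a + b + (t + 1 - (a + b)) = t + 1 := by omega
    rw [← e] at hfrac ⊢
    exact uw_sub_two_mem_closure ha hb (by omega) (by linarith)

theorem frobenius_upper_wythoff_bounds (n F : ℕ) (hn : 1 ≤ n)
    (hF : FrobeniusNumber F {x : ℕ | ∃ j, n ≤ j ∧ x = uw j}) :
    -5 ≤ (F : ℤ) - 3 * (uw n : ℤ) ∧ (F : ℤ) - 3 * (uw n : ℤ) ≤ 20 := by
  obtain ⟨N, hN, hNF⟩ := exists_notMem_closure hn
  have hlow : N ≤ F := hF.2 hNF
  have hup : F < 3 * uw n + 21 := lt_of_not_ge fun h => hF.1 (mem_closure_of_le hn h)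
  omega
end

section
/- For all n ≥ 0, shifting the Zeckendorf representation of n left by two positions and then adding 1 (in the sense of Zeckendorf digit strings: appending the digits 01) yields ⌊(n+1)φ²⌋ − 1; equivalently, if n = Σᵢ aᵢFᵢ is the Zeckendorf representation, then 1 + Σᵢ aᵢF_{i+2} = ⌊(n+1)φ²⌋ − 1, where φ = (1+√5)/2. -/
open Finset Real goldenRatio

section WeightedGeomSum

variable {K : Type*} [Field K] [LinearOrder K] [IsStrictOrderedRing K]

/-- The bounds are the sums of `x ^ j` over the odd and over the even `j`. -/
theorem sum_mul_pow_mem_Ioo_of_neg {x : K} (hx₀ : x < 0) (hx₁ : -1 < x) (b : ℕ → K)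
    (hb₀ : ∀ j, 0 ≤ b j) (hb₁ : ∀ j, b j ≤ 1) (m : ℕ) :
    ∑ j ∈ range m, b j * x ^ j ∈ Set.Ioo (x / (1 - x ^ 2)) (1 / (1 - x ^ 2)) := by
  have hd : 0 < 1 - x ^ 2 := by nlinarith
  induction m generalizing b with
  | zero =>
    simp only [range_zero, sum_empty, Set.mem_Ioo]
    exact ⟨div_neg_of_neg_of_pos hx₀ hd, by positivity⟩
  | succ m ih =>
    obtain ⟨hlo, hhi⟩ := ih (fun j => b (j + 1)) (fun j => hb₀ _) (fun j => hb₁ _)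
    have hsum : ∑ j ∈ range (m + 1), b j * x ^ j
        = b 0 + x * ∑ j ∈ range m, b (j + 1) * x ^ j := by
      rw [sum_range_succ', mul_sum, pow_zero, mul_one, add_comm]
      exact congrArg (b 0 + ·) (sum_congr rfl fun j _ => by ring)
    rw [hsum, Set.mem_Ioo]
    rw [lt_div_iff₀ hd] at hhi ⊢
    rw [div_lt_iff₀ hd] at hlo ⊢
    constructor <;> nlinarith [hb₀ 0, hb₁ 0]

end WeightedGeomSum

theorem sum_mul_goldenConj_pow_mem_Ioo (b : ℕ → ℝ) (hb₀ : ∀ j, 0 ≤ b j) (hb₁ : ∀ j, b j ≤ 1)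
    (m : ℕ) : ∑ j ∈ range m, b j * ψ ^ j ∈ Set.Ioo (-1) φ := by
  have h := sum_mul_pow_mem_Ioo_of_neg goldenConj_neg neg_one_lt_goldenConj b hb₀ hb₁ m
  have hd : 1 - ψ ^ 2 = -ψ := by rw [goldenConj_sq]; ring
  rwa [hd, div_neg, div_self goldenConj_ne_zero, one_div, inv_neg, inv_goldenConj, neg_neg] at h

theorem sum_range_mul_pow_eq_sq_mul {R : Type*} [CommSemiring R] (a : ℕ → R) (x : R)
    (h₀ : a 0 = 0) (h₁ : a 1 = 0) (T : ℕ) :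
    ∑ i ∈ range T, a i * x ^ i = x ^ 2 * ∑ j ∈ range (T - 2), a (j + 2) * x ^ j := by
  rcases T with _ | _ | m
  · simp
  · simp [h₀]
  · rw [show m + 1 + 1 - 2 = m by omega, sum_range_succ', sum_range_succ', mul_sum]
    simp only [h₀, h₁, zero_mul, add_zero]
    exact sum_congr rfl fun j _ => by ring

theorem sum_mul_goldenConj_pow_mem_Ioo_of_eq_zero (a : ℕ → ℕ) (hbit : ∀ i, a i ≤ 1)
    (h₀ : a 0 = 0) (h₁ : a 1 = 0) (T : ℕ) :
    ∑ i ∈ range T, (a i : ℝ) * ψ ^ i ∈ Set.Ioo (-ψ ^ 2) (-ψ) := by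
  rw [sum_range_mul_pow_eq_sq_mul _ _ (by simp [h₀]) (by simp [h₁])]
  obtain ⟨hlo, hhi⟩ := sum_mul_goldenConj_pow_mem_Ioo (fun j => (a (j + 2) : ℝ))
    (fun _ => Nat.cast_nonneg _) (fun j => by exact_mod_cast hbit _) (T - 2)
  have hψ2 : 0 < ψ ^ 2 := sq_pos_of_neg goldenConj_neg
  have hψφ : ψ ^ 2 * φ = -ψ := by rw [sq, mul_assoc, goldenConj_mul_goldenRatio]; ring
  constructor <;> nlinarith

theorem fib_add_two_eq_goldenRatio_sq_mul_fib_add (i : ℕ) :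
    (Nat.fib (i + 2) : ℝ) = φ ^ 2 * Nat.fib i + ψ ^ i := by
  linear_combination fib_succ_sub_goldenRatio_mul_fib (i + 1) +
    φ * fib_succ_sub_goldenRatio_mul_fib i + ψ ^ i * goldenRatio_add_goldenConj

theorem zeckendorf_shift_two_plus_one_general (n T : ℕ) (a : ℕ → ℕ)
    (hbit : ∀ i, a i ≤ 1)
    (h0 : a 0 = 0) (h1 : a 1 = 0)
    (hrep : n = ∑ i ∈ Finset.range T, a i * Nat.fib i) :
    1 + ∑ i ∈ Finset.range T, a i * Nat.fib (i + 2) =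
      ⌊((n : ℝ) + 1) * phi ^ 2⌋₊ - 1 := by
  set S := ∑ i ∈ range T, a i * Nat.fib (i + 2)
  set E := ∑ i ∈ range T, (a i : ℝ) * ψ ^ i
  have hS : (S : ℝ) = φ ^ 2 * n + E := by
    simp only [S, E, hrep, Nat.cast_sum, Nat.cast_mul, mul_sum, ← sum_add_distrib,
      fib_add_two_eq_goldenRatio_sq_mul_fib_add]
    exact sum_congr rfl fun i _ => by ring
  obtain ⟨hElo, hEhi⟩ := sum_mul_goldenConj_pow_mem_Ioo_of_eq_zero a hbit h0 h1 T
  have hφ : φ ^ 2 = 2 - ψ := by rw [goldenRatio_sq, ← one_sub_goldenConj]; ring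
  have hfloor : ⌊((n : ℝ) + 1) * phi ^ 2⌋₊ = S + 2 := by
    rw [Nat.floor_eq_iff (by positivity)]
    push_cast
    change _ ≤ ((n : ℝ) + 1) * φ ^ 2 ∧ ((n : ℝ) + 1) * φ ^ 2 < _
    rw [goldenConj_sq] at hElo
    constructor <;> linarith
  omega

theorem zeckendorf_shift_two_plus_one (n T : ℕ) (a : ℕ → ℕ)
    (hbit : ∀ i, a i ≤ 1)
    (hnoconsec : ∀ i, a i * a (i + 1) = 0)
    (h0 : a 0 = 0) (h1 : a 1 = 0)
    (hrep : n = ∑ i ∈ Finset.range T, a i * Nat.fib i) :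
    1 + ∑ i ∈ Finset.range T, a i * Nat.fib (i + 2) =
      ⌊((n : ℝ) + 1) * phi ^ 2⌋₊ - 1 :=
  zeckendorf_shift_two_plus_one_general n T a hbit h0 h1 hrep
end
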